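/- arXiv:2502.04659 — 4 statements merged into one kernel-verified Lean document; each statement's English description precedes it below -/
import Mathlib

section
/- Let V be a type, let n ≥ 2 be a natural number, let d : ℕ → V be injective on {1,…,n}, and let E ⊆ {1,…,n}. Then the two set equalities { d(i+1) : i odd, 1 ≤ i ≤ n−1, i ∈ E } = { d(i) : i even, 2 ≤ i ≤ n, i ∈ E } and { d(i+1) : i even, 2 ≤ i ≤ n−1, i ∈ E } = { d(i) : i odd, 3 ≤ i ≤ n, i ∈ E } both hold if and only if E = ∅ or E = {1,…,n}. -/
/-!
Given that `d` is injective, the first equality says exactly that an odd `i < n` lies in `E`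
iff `i + 1` does, and the second says the same for even `i < n`. So membership in `E` is
constant along the chain `1, 2, …, n`, and `E ⊆ {1, …, n}` is empty or everything.
-/

open Set

theorem eq_empty_or_eq_Icc_iff_forall_mem_iff_succ_mem {E : Set ℕ} {a b : ℕ}
    (hE : E ⊆ Icc a b) :
    (∀ i, a ≤ i → i < b → (i ∈ E ↔ i + 1 ∈ E)) ↔ E = ∅ ∨ E = Icc a b := by
  constructor
  · intro hstep
    have mem_iff_start : ∀ j, a ≤ j → j ≤ b → (j ∈ E ↔ a ∈ E) := by
      intro j haj
      induction j, haj using Nat.le_induction with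
      | base => simp
      | succ j haj ih =>
        exact fun hjb => (hstep j haj hjb).symm.trans (ih (Nat.le_of_succ_le hjb))
    by_cases ha : a ∈ E
    · exact Or.inr <| hE.antisymm fun j hj => (mem_iff_start j hj.1 hj.2).2 ha
    · exact Or.inl <| eq_empty_of_forall_notMem fun j hj =>
        ha ((mem_iff_start j (hE hj).1 (hE hj).2).1 hj)
  · rintro (rfl | rfl) i hai hib
    · simp
    · simp only [mem_Icc]
      omega

theorem setOf_apply_succ_eq_setOf_apply_iff {V : Type*} {d : ℕ → V} {n a : ℕ}
    (hd : InjOn d (Icc 1 n)) (ha : 1 ≤ a) {P Q : ℕ → Prop} (hPQ : ∀ i, Q (i + 1) ↔ P i)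
    (E : Set ℕ) :
    {v | ∃ i, P i ∧ a ≤ i ∧ i ≤ n - 1 ∧ i ∈ E ∧ v = d (i + 1)} =
        {v | ∃ j, Q j ∧ a + 1 ≤ j ∧ j ≤ n ∧ j ∈ E ∧ v = d j} ↔
      ∀ i, P i → a ≤ i → i < n → (i ∈ E ↔ i + 1 ∈ E) := by
  constructor
  · intro h i hP hai hin
    constructor
    · intro hiE
      have hmem :
          d (i + 1) ∈ {v | ∃ i, P i ∧ a ≤ i ∧ i ≤ n - 1 ∧ i ∈ E ∧ v = d (i + 1)} :=
        ⟨i, hP, hai, by omega, hiE, rfl⟩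
      obtain ⟨j, -, haj, hjn, hjE, hdj⟩ := h ▸ hmem
      rwa [hd ⟨by omega, by omega⟩ ⟨by omega, hjn⟩ hdj]
    · intro hiE
      have hmem :
          d (i + 1) ∈ {v | ∃ j, Q j ∧ a + 1 ≤ j ∧ j ≤ n ∧ j ∈ E ∧ v = d j} :=
        ⟨i + 1, (hPQ i).2 hP, by omega, hin, hiE, rfl⟩
      obtain ⟨j, -, haj, hjn, hjE, hdj⟩ := h ▸ hmem
      rwa [Nat.succ_injective (hd ⟨by omega, by omega⟩ ⟨by omega, by omega⟩ hdj)]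
  · intro h
    ext v
    constructor
    · rintro ⟨i, hP, hai, hin, hiE, rfl⟩
      exact ⟨i + 1, (hPQ i).2 hP, by omega, by omega,
        (h i hP hai (by omega)).1 hiE, rfl⟩
    · rintro ⟨j, hQ, haj, hjn, hjE, rfl⟩
      obtain ⟨i, rfl⟩ : ∃ i, j = i + 1 := ⟨j - 1, by omega⟩
      have hP := (hPQ i).1 hQ
      exact ⟨i, hP, by omega, by omega, (h i hP (by omega) hjn).2 hjE, rfl⟩

theorem Nat.forall_odd_and_forall_even_iff {p : ℕ → Prop} {n : ℕ} :
    ((∀ i, Odd i → 1 ≤ i → i < n → p i) ∧ (∀ i, Even i → 2 ≤ i → i < n → p i)) ↔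
      ∀ i, 1 ≤ i → i < n → p i := by
  refine ⟨fun ⟨hodd, heven⟩ i h1i hin => ?_,
    fun h => ⟨fun i _ => h i, fun i _ h2i => h i (by omega)⟩⟩
  rcases Nat.even_or_odd i with hi | hi
  · exact heven i hi (by rcases hi with ⟨k, rfl⟩; omega) hin
  · exact hodd i hi h1i hin

theorem stmt0_general {V : Type*} (n : ℕ) (d : ℕ → V)
    (hd : Set.InjOn d (Set.Icc 1 n)) (E : Set ℕ) (hE : E ⊆ Set.Icc 1 n) :
    (({v : V | ∃ i, Odd i ∧ 1 ≤ i ∧ i ≤ n - 1 ∧ i ∈ E ∧ v = d (i + 1)} =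
        {v : V | ∃ i, Even i ∧ 2 ≤ i ∧ i ≤ n ∧ i ∈ E ∧ v = d i}) ∧
      ({v : V | ∃ i, Even i ∧ 2 ≤ i ∧ i ≤ n - 1 ∧ i ∈ E ∧ v = d (i + 1)} =
        {v : V | ∃ i, Odd i ∧ 3 ≤ i ∧ i ≤ n ∧ i ∈ E ∧ v = d i})) ↔
      (E = ∅ ∨ E = Set.Icc 1 n) :=
  calc _ ↔ (∀ i, Odd i → 1 ≤ i → i < n → (i ∈ E ↔ i + 1 ∈ E)) ∧
        (∀ i, Even i → 2 ≤ i → i < n → (i ∈ E ↔ i + 1 ∈ E)) :=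
        (setOf_apply_succ_eq_setOf_apply_iff (a := 1) hd le_rfl
            (fun _ => Nat.even_add_one.trans Nat.not_even_iff_odd) E).and
          (setOf_apply_succ_eq_setOf_apply_iff (a := 2) hd one_le_two
            (fun _ => Nat.odd_add_one.trans Nat.not_odd_iff_even) E)
    _ ↔ ∀ i, 1 ≤ i → i < n → (i ∈ E ↔ i + 1 ∈ E) :=
        Nat.forall_odd_and_forall_even_iff
    _ ↔ _ := eq_empty_or_eq_Icc_iff_forall_mem_iff_succ_mem hE

/-- combinatorial core of Lemma 1 (all-or-nothing execution under
the SVS General System Contract). -/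
theorem stmt0 {V : Type*} (n : ℕ) (hn : 2 ≤ n) (d : ℕ → V)
    (hd : Set.InjOn d (Set.Icc 1 n)) (E : Set ℕ) (hE : E ⊆ Set.Icc 1 n) :
    (({v : V | ∃ i, Odd i ∧ 1 ≤ i ∧ i ≤ n - 1 ∧ i ∈ E ∧ v = d (i + 1)} =
        {v : V | ∃ i, Even i ∧ 2 ≤ i ∧ i ≤ n ∧ i ∈ E ∧ v = d i}) ∧
      ({v : V | ∃ i, Even i ∧ 2 ≤ i ∧ i ≤ n - 1 ∧ i ∈ E ∧ v = d (i + 1)} =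
        {v : V | ∃ i, Odd i ∧ 3 ≤ i ∧ i ≤ n ∧ i ∈ E ∧ v = d i})) ↔
      (E = ∅ ∨ E = Set.Icc 1 n) :=
  stmt0_general n d hd E hE
end

section
/- Let k ≥ 1, let i : {0,…,k−1} → ℕ be a bijection onto the odd numbers {1, 3, …, 2k−1}, let j : {0,…,k−1} → ℕ be a bijection onto the even numbers {2, 4, …, 2k}, and let f, l ∈ {0,…,k−1} satisfy i(f) = 1 and j(l) = 2k. Then the conjunction of (a) j(r) = i(r) + 1 for all r, and (b) the list (j(0)+1, j(1)+1, …, j(k−1)+1) with its l-th entry deleted equals the list (i(0), i(1), …, i(k−1)) with its f-th entry deleted, holds if and only if either i(r) = 2r+1 and j(r) = 2r+2 for all r, or i(r) = 2(k−1−r)+1 and j(r) = 2(k−1−r)+2 for all r. -/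
/-!
Write `L` for the list of the values `i r`. Given (a), the list of the `j r + 1` is `L` shifted
by `2`, so (b) says that deleting one entry from `L.map (· + 2)` and one entry from `L` leaves the
same list. Comparing entry by entry, a position in front of both deleted entries would give
`x + 2 = x`; so one of the two deletions is at the front, and then the other one has to be at the
back, which forces `L` to be an arithmetic progression with difference `2` or `-2`. The values
`i f = 1` and `j l = 2k` then pin down its first term.
-/

namespace List

variable {α : Type*} {L : List α} {g : α → α} {f l : ℕ}

theorem map_eraseIdx_eq_eraseIdx_iff_forall (hf : f < L.length) (hl : l < L.length) :
    (L.map g).eraseIdx l = L.eraseIdx f ↔ ∀ t (ht : t + 1 < L.length),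
      g (if t < l then L[t] else L[t + 1]) = if t < f then L[t] else L[t + 1] := by
  have hlen : ((L.map g).eraseIdx l).length = L.length - 1 := by
    rw [length_eraseIdx_of_lt (by simpa using hl), length_map]
  simp only [ext_getElem_iff, hlen, length_eraseIdx_of_lt hf, true_and, getElem_eraseIdx,
    getElem_map]
  constructor
  · intro h t ht
    have := h t (by omega) (by omega)
    split_ifs at this ⊢ <;> exact this
  · intro h t ht _
    have := h t (by omega)
    split_ifs at this ⊢ <;> exact this

theorem map_eraseIdx_eq_eraseIdx_iff (hg : ∀ x, g x ≠ x) (hf : f < L.length)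
    (hl : l < L.length) :
    (L.map g).eraseIdx l = L.eraseIdx f ↔
      (f = 0 ∧ l = L.length - 1 ∧ ∀ t (ht : t + 1 < L.length), L[t + 1] = g L[t]) ∨
      (l = 0 ∧ f = L.length - 1 ∧ ∀ t (ht : t + 1 < L.length), g L[t + 1] = L[t]) := by
  rw [map_eraseIdx_eq_eraseIdx_iff_forall hf hl]
  constructor
  · intro h
    have hfl : f = 0 ∨ l = 0 := by
      by_contra! hfl
      have := h 0 (by omega)
      rw [if_pos (Nat.pos_of_ne_zero hfl.2), if_pos (Nat.pos_of_ne_zero hfl.1)] at this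
      exact hg _ this
    rcases hfl with rfl | rfl
    · have hl' : l = L.length - 1 := by
        by_contra hl'
        have := h l (by omega)
        rw [if_neg (lt_irrefl l), if_neg (Nat.not_lt_zero l)] at this
        exact hg _ this
      refine .inl ⟨rfl, hl', fun t ht => ?_⟩
      have := h t ht
      rw [if_pos (by omega), if_neg (Nat.not_lt_zero t)] at this
      exact this.symm
    · have hf' : f = L.length - 1 := by
        by_contra hf'
        have := h f (by omega)
        rw [if_neg (Nat.not_lt_zero f), if_neg (lt_irrefl f)] at this
        exact hg _ this
      refine .inr ⟨rfl, hf', fun t ht => ?_⟩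
      have := h t ht
      rwa [if_neg (Nat.not_lt_zero t), if_pos (by omega)] at this
  · rintro (⟨rfl, rfl, h⟩ | ⟨rfl, rfl, h⟩) t ht
    · simp [show t < L.length - 1 by omega, h]
    · simp [show t < L.length - 1 by omega, h]

theorem getElem_eq_iterate_getElem_zero (h : ∀ t (ht : t + 1 < L.length), L[t + 1] = g L[t])
    (t : ℕ) (ht : t < L.length) : L[t] = g^[t] L[0] := by
  induction t with
  | zero => rfl
  | succ t ih => rw [h t ht, ih, Function.iterate_succ_apply']

theorem getElem_zero_eq_iterate_getElem (h : ∀ t (ht : t + 1 < L.length), g L[t + 1] = L[t])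
    (t : ℕ) (ht : t < L.length) : L[0] = g^[t] L[t] := by
  induction t with
  | zero => rfl
  | succ t ih => rw [ih (by omega), ← h t ht, Function.iterate_succ_apply]

end List

theorem stmt2_general (k : ℕ) (i j : Fin k → ℕ)
    (f l : Fin k) (hf : i f = 1) (hl : j l = 2 * k) :
    ((∀ r : Fin k, j r = i r + 1) ∧
      (List.ofFn (fun r : Fin k => j r + 1)).eraseIdx (l : ℕ) =
        (List.ofFn i).eraseIdx (f : ℕ)) ↔
    ((∀ r : Fin k, i r = 2 * (r : ℕ) + 1 ∧ j r = 2 * (r : ℕ) + 2) ∨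
      (∀ r : Fin k, i r = 2 * (k - 1 - (r : ℕ)) + 1 ∧ j r = 2 * (k - 1 - (r : ℕ)) + 2)) := by
  have hmap (ha : ∀ r, j r = i r + 1) :
      List.ofFn (fun r => j r + 1) = (List.ofFn i).map (· + 2) := by
    simp [List.map_ofFn, Function.comp_def, ha]
  rw [and_congr_right fun ha => by
    rw [hmap ha, List.map_eraseIdx_eq_eraseIdx_iff (fun x => by omega) (by simp) (by simp)]]
  constructor
  · rintro ⟨ha, ⟨hf0, -, hstep⟩ | ⟨hl0, -, hstep⟩⟩
    · have h0 : i ⟨0, f.pos⟩ = 1 := by rw [← hf]; exact congrArg i (Fin.ext hf0.symm)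
      refine .inl fun r => ?_
      have hir := List.getElem_eq_iterate_getElem_zero (g := (· + 2)) hstep r (by simp)
      simp only [List.getElem_ofFn, add_right_iterate_apply, smul_eq_mul, Fin.eta, h0] at hir
      have := ha r
      omega
    · have h0 : i ⟨0, l.pos⟩ = 2 * k - 1 := by
        rw [show (⟨0, l.pos⟩ : Fin k) = l from Fin.ext hl0.symm]; have := ha l; omega
      refine .inr fun r => ?_
      have hir := List.getElem_zero_eq_iterate_getElem (g := (· + 2)) hstep r (by simp)
      simp only [List.getElem_ofFn, add_right_iterate_apply, smul_eq_mul, Fin.eta, h0] at hir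
      have := ha r
      omega
  · intro h
    have ha : ∀ r, j r = i r + 1 := fun r => by rcases h with h | h <;> have := h r <;> omega
    refine ⟨ha, ?_⟩
    simp only [List.length_ofFn, List.getElem_ofFn]
    rcases h with h | h
    · obtain ⟨⟨hif, -⟩, ⟨-, hjl⟩⟩ := And.intro (h f) (h l)
      exact .inl ⟨by omega, by omega, fun t ht => by simp only [h]; omega⟩
    · obtain ⟨⟨hif, -⟩, ⟨-, hjl⟩⟩ := And.intro (h f) (h l)
      exact .inr ⟨by omega, by omega, fun t ht => by simp only [h]; omega⟩

/-- combinatorial core of Lemma 2 (order preserved or fully reversed). -/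
theorem stmt2 (k : ℕ) (hk : 1 ≤ k) (i j : Fin k → ℕ)
    (hi_inj : Function.Injective i)
    (hi_range : Set.range i = {m : ℕ | Odd m ∧ 1 ≤ m ∧ m ≤ 2 * k - 1})
    (hj_inj : Function.Injective j)
    (hj_range : Set.range j = {m : ℕ | Even m ∧ 2 ≤ m ∧ m ≤ 2 * k})
    (f l : Fin k) (hf : i f = 1) (hl : j l = 2 * k) :
    ((∀ r : Fin k, j r = i r + 1) ∧
      (List.ofFn (fun r : Fin k => j r + 1)).eraseIdx (l : ℕ) =
        (List.ofFn i).eraseIdx (f : ℕ)) ↔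
    ((∀ r : Fin k, i r = 2 * (r : ℕ) + 1 ∧ j r = 2 * (r : ℕ) + 2) ∨
      (∀ r : Fin k, i r = 2 * (k - 1 - (r : ℕ)) + 1 ∧ j r = 2 * (k - 1 - (r : ℕ)) + 2)) :=
  stmt2_general k i j f l hf hl
end

section
/- Let k ≥ 1, let i : {0,…,k−1} → ℕ be a bijection onto the odd numbers {1, 3, …, 2k−1}, let j : {0,…,k−1} → ℕ be a bijection onto the even numbers {2, 4, …, 2k}, and let f, l ∈ {0,…,k−1} satisfy i(f) = 1 and j(l) = 2k. Assume (a) j(r) = i(r) + 1 for all r, (b) the list (j(0)+1, j(1)+1, …, j(k−1)+1) with its l-th entry deleted equals the list (i(0), i(1), …, i(k−1)) with its f-th entry deleted, and additionally l = 0 (i.e., j(0) = 2k). Then f = k−1 and, for all r, i(r) = 2(k−1−r)+1 and j(r) = 2(k−1−r)+2. -/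
/-! With `l = 0`, condition (b) says that shifting every entry of `L = [i 0, …, i (k-1)]` up by
two and dropping the head gives `L` with its `f`-th entry deleted. Comparing the two lists at
position `f` shows `f` is the last index, since otherwise the entry `i (f+1)` would equal
`i (f+1) + 2`. Hence `i (n+1) + 2 = i n` for consecutive indices, and `i 0 = j 0 - 1 = 2k - 1`
pins down the whole decreasing progression. -/

namespace List

variable {α : Type*} {g : α → α} {L : List α} {f : ℕ}

theorem eq_length_sub_one_of_tail_map_eq_eraseIdx (hg : ∀ a, g a ≠ a) (hf : f < L.length)
    (h : (L.map g).tail = L.eraseIdx f) : f = L.length - 1 := by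
  by_contra hne
  have hcmp := getElem_of_eq h (i := f) (by simp; omega)
  rw [getElem_tail, getElem_map, getElem_eraseIdx_of_ge _ le_rfl] at hcmp
  exact hg _ hcmp

theorem getElem_succ_of_tail_map_eq_eraseIdx (hg : ∀ a, g a ≠ a) (hf : f < L.length)
    (h : (L.map g).tail = L.eraseIdx f) (n : ℕ) (hn : n + 1 < L.length) :
    g L[n + 1] = L[n] := by
  have hlast := eq_length_sub_one_of_tail_map_eq_eraseIdx hg hf h
  have hcmp := getElem_of_eq h (i := n) (by simp; omega)
  rwa [getElem_tail, getElem_map, getElem_eraseIdx_of_lt _ (by omega)] at hcmp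

theorem getElem_add_mul_eq_getElem_zero {L : List ℕ} {d : ℕ}
    (hstep : ∀ n (hn : n + 1 < L.length), L[n + 1] + d = L[n]) :
    ∀ n (hn : n < L.length), L[n] + d * n = L[0]
  | 0, _ => by simp
  | n + 1, hn => by
    have ih := getElem_add_mul_eq_getElem_zero hstep n (by omega)
    rw [← ih, ← hstep n hn]
    ring

end List

theorem stmt3_general (k : ℕ) (i j : Fin k → ℕ)
    (f l : Fin k) (hl : j l = 2 * k)
    (ha : ∀ r : Fin k, j r = i r + 1)
    (hb : (List.ofFn (fun r : Fin k => j r + 1)).eraseIdx (l : ℕ) =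
        (List.ofFn i).eraseIdx (f : ℕ))
    (hl0 : (l : ℕ) = 0) :
    (f : ℕ) = k - 1 ∧
      ∀ r : Fin k, i r = 2 * (k - 1 - (r : ℕ)) + 1 ∧ j r = 2 * (k - 1 - (r : ℕ)) + 2 := by
  have hg : ∀ a : ℕ, a + 2 ≠ a := by omega
  have hf : (f : ℕ) < (List.ofFn i).length := by simp
  have hshift : ((List.ofFn i).map (· + 2)).tail = (List.ofFn i).eraseIdx f := by
    rw [← hb, hl0, List.eraseIdx_zero, List.map_ofFn]
    simp only [Function.comp_def, ha]
  have hprog := List.getElem_add_mul_eq_getElem_zero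
    (List.getElem_succ_of_tail_map_eq_eraseIdx hg hf hshift)
  have hk : 0 < k := by have := l.2; omega
  have hhead : (List.ofFn i)[0]'(by simpa using hk) = 2 * k - 1 := by
    rw [List.getElem_ofFn, show (⟨0, _⟩ : Fin k) = l from Fin.ext hl0.symm]
    have := ha l
    omega
  refine ⟨by simpa using List.eq_length_sub_one_of_tail_map_eq_eraseIdx hg hf hshift,
    fun r => ?_⟩
  have hr := hprog r (by simp)
  rw [hhead, List.getElem_ofFn, Fin.eta] at hr
  have := r.2
  exact ⟨by omega, by rw [ha]; omega⟩

/-- Case 1 in the proof of Lemma 2 (full reversal). -/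
theorem stmt3 (k : ℕ) (hk : 1 ≤ k) (i j : Fin k → ℕ)
    (hi_inj : Function.Injective i)
    (hi_range : Set.range i = {m : ℕ | Odd m ∧ 1 ≤ m ∧ m ≤ 2 * k - 1})
    (hj_inj : Function.Injective j)
    (hj_range : Set.range j = {m : ℕ | Even m ∧ 2 ≤ m ∧ m ≤ 2 * k})
    (f l : Fin k) (hf : i f = 1) (hl : j l = 2 * k)
    (ha : ∀ r : Fin k, j r = i r + 1)
    (hb : (List.ofFn (fun r : Fin k => j r + 1)).eraseIdx (l : ℕ) =
        (List.ofFn i).eraseIdx (f : ℕ))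
    (hl0 : (l : ℕ) = 0) :
    (f : ℕ) = k - 1 ∧
      ∀ r : Fin k, i r = 2 * (k - 1 - (r : ℕ)) + 1 ∧ j r = 2 * (k - 1 - (r : ℕ)) + 2 :=
  stmt3_general k i j f l hl ha hb hl0
end

section
/- Let V be a type and let bs be a list of nonempty lists over V (the 'blocks'). Define the tagged flattening L as the list of pairs in V × ℕ obtained by replacing every element x of the b-th block bs[b] by the pair (x, b) and concatenating the resulting lists in order. Say a nonempty list A over V satisfies A ⊆* L if there is a contiguous interval of positions of L such that the first components of the entries of L on that interval read A in order, all entries of L on that interval have the same second component t, and no entry of L outside that interval has second component t. Then A ⊆* L if and only if there exists t < length(bs) with A = bs[t]. -/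
/-!
Within the tagged flattening of `bs`, the entries carrying tag `t` are exactly the entries of
block `t`, so a run `A` isolated by tag `t` must be the whole of block `t`: filtering a
decomposition `P ++ A.map (·, t) ++ Q` by tag `t` recovers `A`. Conversely block `t` is
isolated by its tag, since everything before it is tagged below `t` and everything after it
above `t`. A nonempty run tagged `t` forces `t` to index an actual block.
-/

namespace List

/-- The relation `A ⊆* L` of the paper, witnessed by the tag `t`. -/
def IsTagBlock {α β : Type*} (L : List (α × β)) (A : List α) (t : β) : Prop :=
  ∃ P Q : List (α × β), L = P ++ A.map (·, t) ++ Q ∧ (∀ p ∈ P, p.2 ≠ t) ∧ ∀ p ∈ Q, p.2 ≠ t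

section IsTagBlock

variable {α β : Type*} [DecidableEq β] {L : List (α × β)} {A B : List α} {t : β}

theorem IsTagBlock.filter_snd_eq (h : L.IsTagBlock A t) :
    L.filter (·.2 = t) = A.map (·, t) := by
  obtain ⟨P, Q, rfl, hP, hQ⟩ := h
  have hPnil : P.filter (·.2 = t) = [] := by simpa using hP
  have hQnil : Q.filter (·.2 = t) = [] := by simpa using hQ
  have hA : (A.map (·, t)).filter (·.2 = t) = A.map (·, t) := by simp
  rw [filter_append, filter_append, hPnil, hQnil, hA, nil_append, append_nil]

theorem IsTagBlock.unique (hA : L.IsTagBlock A t) (hB : L.IsTagBlock B t) : A = B :=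
  (map_inj_right fun _ _ h => (Prod.mk.inj h).1).mp (hA.filter_snd_eq.symm.trans hB.filter_snd_eq)

end IsTagBlock

theorem IsTagBlock.mem {α β : Type*} {L : List (α × β)} {A : List α} {t : β}
    (h : L.IsTagBlock A t) {x : α} (hx : x ∈ A) : (x, t) ∈ L := by
  obtain ⟨P, Q, rfl, -, -⟩ := h
  exact mem_append_left _ (mem_append_right _ (mem_map_of_mem hx))

/-- The tree built from the blocks `bs`, block `i` being inserted with nonce `n + i`. -/
def tagFlatten {V : Type*} (bs : List (List V)) (n : ℕ) : List (V × ℕ) :=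
  ((bs.zipIdx n).map fun p => p.1.map (·, p.2)).flatten

section tagFlatten

variable {V : Type*} (bs : List (List V)) (n : ℕ)

theorem tagFlatten_append (cs : List (List V)) :
    tagFlatten (bs ++ cs) n = tagFlatten bs n ++ tagFlatten cs (n + bs.length) := by
  simp [tagFlatten, zipIdx_append]

theorem tagFlatten_cons (b : List V) :
    tagFlatten (b :: bs) n = b.map (·, n) ++ tagFlatten bs (n + 1) := by
  simp [tagFlatten, zipIdx_cons]

theorem snd_mem_Ico_of_mem_tagFlatten {p : V × ℕ} (hp : p ∈ tagFlatten bs n) :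
    n ≤ p.2 ∧ p.2 < n + bs.length := by
  obtain ⟨_, hl, hp⟩ := mem_flatten.mp hp
  obtain ⟨c, hc, rfl⟩ := mem_map.mp hl
  obtain ⟨x, -, rfl⟩ := mem_map.mp hp
  exact ⟨le_snd_of_mem_zipIdx (x := c) hc, snd_lt_add_of_mem_zipIdx (x := c) hc⟩

theorem isTagBlock_tagFlatten_getElem {i : ℕ} (hi : i < bs.length) :
    (tagFlatten bs n).IsTagBlock bs[i] (n + i) := by
  have hsplit : bs = bs.take i ++ bs[i] :: bs.drop (i + 1) := by
    rw [← drop_eq_getElem_cons hi, take_append_drop]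
  have hlen : (bs.take i).length = i := length_take_of_le hi.le
  refine ⟨tagFlatten (bs.take i) n, tagFlatten (bs.drop (i + 1)) (n + i + 1), ?_, ?_, ?_⟩
  · conv_lhs => rw [hsplit, tagFlatten_append, tagFlatten_cons, hlen]
    rw [append_assoc]
  · intro p hp
    have := snd_mem_Ico_of_mem_tagFlatten _ _ hp
    omega
  · intro p hp
    have := snd_mem_Ico_of_mem_tagFlatten _ _ hp
    omega

end tagFlatten

end List

open List in
theorem stmt5_general {V : Type*} (bs : List (List V))
    (A : List V) (hA : A ≠ []) :
    (∃ (P Q : List (V × ℕ)) (t : ℕ),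
        (bs.zipIdx.map (fun p => p.1.map (fun x => (x, p.2)))).flatten =
          P ++ A.map (fun x => (x, t)) ++ Q ∧
        (∀ p ∈ P, p.2 ≠ t) ∧ (∀ p ∈ Q, p.2 ≠ t)) ↔
      ∃ t, ∃ ht : t < bs.length, A = bs.get ⟨t, ht⟩ := by
  constructor
  · rintro ⟨P, Q, t, hblock⟩
    have hA_block : (tagFlatten bs 0).IsTagBlock A t := ⟨P, Q, hblock⟩
    obtain ⟨x, hx⟩ := exists_mem_of_ne_nil A hA
    have ht : t < bs.length := by
      simpa using (snd_mem_Ico_of_mem_tagFlatten bs 0 (hA_block.mem hx)).2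
    have hbs_block := isTagBlock_tagFlatten_getElem bs 0 ht
    rw [Nat.zero_add] at hbs_block
    exact ⟨t, ht, hA_block.unique hbs_block⟩
  · rintro ⟨t, ht, rfl⟩
    obtain ⟨P, Q, hblock⟩ := isTagBlock_tagFlatten_getElem bs 0 ht
    rw [Nat.zero_add] at hblock
    exact ⟨P, Q, t, hblock⟩

/-- combinatorial core of Claim 2 (characterization of ⊆*). -/
theorem stmt5 {V : Type*} (bs : List (List V)) (hbs : ∀ b ∈ bs, b ≠ [])
    (A : List V) (hA : A ≠ []) :
    (∃ (P Q : List (V × ℕ)) (t : ℕ),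
        (bs.zipIdx.map (fun p => p.1.map (fun x => (x, p.2)))).flatten =
          P ++ A.map (fun x => (x, t)) ++ Q ∧
        (∀ p ∈ P, p.2 ≠ t) ∧ (∀ p ∈ Q, p.2 ≠ t)) ↔
      ∃ t, ∃ ht : t < bs.length, A = bs.get ⟨t, ht⟩ :=
  stmt5_general bs A hA
end
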